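/- Let A be a topological ring with fundamental system of open ideals (𝔞_n)_{n∈ℕ}, let S ⊆ A be a multiplicatively closed subset containing 1, and let j̃ : A → Â_S be the separated completed localization of A with respect to S. Then for every complete topological ring B and every continuous ring homomorphism φ : A → B such that φ(s) is invertible in B for every s ∈ S, there exists a unique continuous ring homomorphism ψ : Â_S → B with φ = ψ ∘ j̃. -/

import Mathlib

open Filter Topology

/-- A topological ring has a linear topology admitting a countable decreasing fundamental
system of open ideals starting with the whole ring. -/
def HasLinearRingTopology (A : Type*) [CommRing A] [TopologicalSpace A] : Prop :=
  ∃ a : ℕ → Ideal A, a 0 = ⊤ ∧ (∀ m n : ℕ, n ≤ m → a m ≤ a n) ∧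
    (∀ n, IsOpen (a n : Set A)) ∧ ∀ s ∈ nhds (0 : A), ∃ n, (a n : Set A) ⊆ s

variable {A : Type*} [CommRing A]

/-- The image of a multiplicatively closed subset in the quotient `A ⧸ a n`. -/
def quotImageSubmonoid (a : ℕ → Ideal A) (S : Submonoid A) (n : ℕ) :
    Submonoid (A ⧸ a n) := S.map (Ideal.Quotient.mk (a n))

/-- Transition homomorphisms `S_m⁻¹(A/𝔞_m) → S_n⁻¹(A/𝔞_n)` of the inverse system defining
the separated completed localization. -/
noncomputable def locTrans (a : ℕ → Ideal A) (hmono : ∀ m n : ℕ, n ≤ m → a m ≤ a n)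
    (S : Submonoid A) (m n : ℕ) (h : n ≤ m) :
    Localization (quotImageSubmonoid a S m) →+* Localization (quotImageSubmonoid a S n) :=
  IsLocalization.map (M := quotImageSubmonoid a S m) (T := quotImageSubmonoid a S n)
    (Localization (quotImageSubmonoid a S n))
    (Ideal.Quotient.factor (hmono m n h))
    (by
      intro x hx
      obtain ⟨s, hs, rfl⟩ := Submonoid.mem_map (f := Ideal.Quotient.mk (a m)) |>.mp hx
      refine Submonoid.mem_comap.mpr
        (Submonoid.mem_map (f := Ideal.Quotient.mk (a n)) |>.mpr ⟨s, hs, ?_⟩)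
      exact (Ideal.Quotient.factor_mk (hmono m n h) s).symm)

/-- The separated completed localization `Â_S = lim_n S_n⁻¹(A/𝔞_n)`, as a subring of the
product of the (discrete) localizations. -/
noncomputable def locInvLimit (a : ℕ → Ideal A) (hmono : ∀ m n : ℕ, n ≤ m → a m ≤ a n)
    (S : Submonoid A) :
    Subring (∀ n, Localization (quotImageSubmonoid a S n)) where
  carrier := {f | ∀ (m n : ℕ) (h : n ≤ m), locTrans a hmono S m n h (f m) = f n}
  zero_mem' := by intro m n h; simp
  one_mem' := by intro m n h; simp
  add_mem' := by
    intro f g hf hg m n h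
    simp only [Pi.add_apply, map_add, hf m n h, hg m n h]
  mul_mem' := by
    intro f g hf hg m n h
    simp only [Pi.mul_apply, map_mul, hf m n h, hg m n h]
  neg_mem' := by
    intro f hf m n h
    simp only [Pi.neg_apply, map_neg, hf m n h]

/-- The canonical separated completed localization homomorphism `j̃ : A → Â_S`,
as a function. -/
noncomputable def locInvLimitMk (a : ℕ → Ideal A) (hmono : ∀ m n : ℕ, n ≤ m → a m ≤ a n)
    (S : Submonoid A) (x : A) : locInvLimit a hmono S :=
  ⟨fun n => algebraMap (A ⧸ a n) (Localization (quotImageSubmonoid a S n))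
      (Ideal.Quotient.mk (a n) x),
    fun m n h => by
      simp only [locTrans, IsLocalization.map_eq, Ideal.Quotient.factor_mk]⟩

/-- Each localization `S_n⁻¹(A/𝔞_n)` carries the discrete topology. -/
local instance (priority := 10000) locTopDiscrete {R : Type*} [CommMonoid R]
    (M : Submonoid R) : TopologicalSpace (Localization M) := ⊥

/-! Write `𝔟_k` for the open ideals of `B`. Since `B` is complete and separated, a ring map into
`B` is the same as a compatible family of ring maps into the discrete rings `B ⧸ 𝔟_k`. Continuity
of `φ` gives `N` with `φ(𝔞_N) ⊆ 𝔟_k`, so `A → B ⧸ 𝔟_k` factors through `S_N⁻¹(A/𝔞_N)` and hence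
through the projection of `Â_S` to level `N`. These maps are compatible because a map out of `Â_S`
that factors through some level is determined by its values on `j̃(A)`: the canonical map
`S⁻¹A → S_N⁻¹(A/𝔞_N)` is surjective. The same surjectivity makes the image of `S⁻¹A` dense
in `Â_S`, which gives uniqueness. -/

section OpenSubgroupBasis

variable {G : Type*} [AddGroup G] {b : ℕ → AddSubgroup G}

theorem hasBasis_nhds_zero_of_isOpen [TopologicalSpace G] (hopen : ∀ k, IsOpen (b k : Set G))
    (hbasis : ∀ s ∈ 𝓝 (0 : G), ∃ k, (b k : Set G) ⊆ s) :
    (𝓝 (0 : G)).HasBasis (fun _ => True) (fun k => (b k : Set G)) :=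
  ⟨fun s => ⟨fun hs => by simpa using hbasis s hs,
    fun ⟨k, _, hk⟩ => Filter.mem_of_superset ((hopen k).mem_nhds (b k).zero_mem) hk⟩⟩

theorem eq_zero_of_forall_mem [TopologicalSpace G] [T1Space G]
    (hbasis : ∀ s ∈ 𝓝 (0 : G), ∃ k, (b k : Set G) ⊆ s) {x : G} (hx : ∀ k, x ∈ b k) : x = 0 := by
  by_contra hne
  obtain ⟨k, hk⟩ := hbasis {x}ᶜ (isOpen_compl_singleton.mem_nhds (Ne.symm hne))
  exact hk (hx k) rfl

theorem exists_forall_sub_mem_of_forall_le_sub_mem [UniformSpace G] [IsUniformAddGroup G]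
    [CompleteSpace G] (hopen : ∀ k, IsOpen (b k : Set G))
    (hbasis : ∀ s ∈ 𝓝 (0 : G), ∃ k, (b k : Set G) ⊆ s) {x : ℕ → G}
    (hx : ∀ k l, k ≤ l → x l - x k ∈ b k) : ∃ y, ∀ k, y - x k ∈ b k := by
  have hcauchy : CauchySeq x :=
    (hasBasis_nhds_zero_of_isOpen hopen hbasis).uniformity_of_nhds_zero.cauchySeq_iff.mpr
      fun k _ => ⟨k, fun m hm n hn => by simpa using sub_mem (hx k n hn) (hx k m hm)⟩
  obtain ⟨y, hy⟩ := cauchySeq_tendsto_of_complete hcauchy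
  refine ⟨y, fun k => ?_⟩
  have hclosed : IsClosed {z : G | z - x k ∈ b k} :=
    ((b k).isClosed_of_isOpen (hopen k)).preimage (continuous_sub_right (x k))
  exact hclosed.mem_of_tendsto hy (Filter.eventually_atTop.mpr ⟨k, hx k⟩)

end OpenSubgroupBasis

section CompatibleQuotients

variable {B : Type*} [CommRing B] {b : ℕ → Ideal B}

theorem eq_of_forall_mk_eq [TopologicalSpace B] [T1Space B]
    (hbasis : ∀ s ∈ 𝓝 (0 : B), ∃ k, (b k : Set B) ⊆ s)
    {x y : B} (h : ∀ k, Ideal.Quotient.mk (b k) x = Ideal.Quotient.mk (b k) y) : x = y :=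
  sub_eq_zero.mp <| eq_zero_of_forall_mem (b := fun k => (b k).toAddSubgroup) hbasis
    fun k => Ideal.Quotient.eq.mp (h k)

theorem exists_ringHom_mk_comp_eq [UniformSpace B] [IsUniformAddGroup B] [CompleteSpace B]
    [T1Space B] (hmono : ∀ m n : ℕ, n ≤ m → b m ≤ b n) (hopen : ∀ k, IsOpen (b k : Set B))
    (hbasis : ∀ s ∈ 𝓝 (0 : B), ∃ k, (b k : Set B) ⊆ s) {R : Type*} [Semiring R]
    (ψ : ∀ k, R →+* B ⧸ b k)
    (hψ : ∀ k l (h : k ≤ l), (Ideal.Quotient.factor (hmono l k h)).comp (ψ l) = ψ k) :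
    ∃ g : R →+* B, ∀ k, (Ideal.Quotient.mk (b k)).comp g = ψ k := by
  have hlift : ∀ r, ∃ y : B, ∀ k, Ideal.Quotient.mk (b k) y = ψ k r := by
    intro r
    choose x hx using fun k => Ideal.Quotient.mk_surjective (ψ k r)
    have hcompat : ∀ k l, k ≤ l → x l - x k ∈ b k := fun k l hkl => Ideal.Quotient.eq.mp <| by
      rw [← Ideal.Quotient.factor_mk (hmono l k hkl), hx, hx, ← hψ k l hkl, RingHom.comp_apply]
    obtain ⟨y, hy⟩ := exists_forall_sub_mem_of_forall_le_sub_mem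
      (b := fun k => (b k).toAddSubgroup) hopen hbasis hcompat
    exact ⟨y, fun k => (hx k) ▸ Ideal.Quotient.eq.mpr (hy k)⟩
  choose g hg using hlift
  refine ⟨{ toFun := g, map_one' := ?_, map_mul' := ?_, map_zero' := ?_, map_add' := ?_ },
    fun k => RingHom.ext fun r => hg r k⟩ <;>
  intros <;> exact eq_of_forall_mk_eq hbasis fun k => by simp [hg]

theorem continuous_of_preimage_mem_nhds_zero [TopologicalSpace B] [IsTopologicalAddGroup B]
    (hopen : ∀ k, IsOpen (b k : Set B)) (hbasis : ∀ s ∈ 𝓝 (0 : B), ∃ k, (b k : Set B) ⊆ s)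
    {M : Type*} [AddCommGroup M] [TopologicalSpace M] [IsTopologicalAddGroup M] (g : M →+ B)
    (hg : ∀ k, g ⁻¹' (b k) ∈ 𝓝 0) : Continuous g := by
  refine continuous_of_continuousAt_zero g ?_
  have hb := hasBasis_nhds_zero_of_isOpen (b := fun k => (b k).toAddSubgroup) hopen hbasis
  rw [ContinuousAt, map_zero, hb.tendsto_right_iff]
  exact fun k _ => hg k

end CompatibleQuotients

instance {R : Type*} [CommMonoid R] (M : Submonoid R) : DiscreteTopology (Localization M) :=
  ⟨rfl⟩

section Levels

variable (a : ℕ → Ideal A) (S : Submonoid A)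

noncomputable def localizationToLevel (n : ℕ) :
    Localization S →+* Localization (quotImageSubmonoid a S n) :=
  IsLocalization.map (T := quotImageSubmonoid a S n) _ (Ideal.Quotient.mk (a n)) S.le_comap_map

theorem localizationToLevel_surjective (n : ℕ) :
    Function.Surjective (localizationToLevel a S n) :=
  have : IsLocalization (S.map (Ideal.Quotient.mk (a n)))
      (Localization (quotImageSubmonoid a S n)) := Localization.isLocalization
  IsLocalization.map_surjective_of_surjective S (Localization S) _ Ideal.Quotient.mk_surjective

theorem localizationToLevel_algebraMap (n : ℕ) (x : A) :
    localizationToLevel a S n (algebraMap A _ x) =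
      algebraMap _ _ (Ideal.Quotient.mk (a n) x) :=
  IsLocalization.map_eq _ _

theorem locTrans_algebraMap_mk (hmono : ∀ m n : ℕ, n ≤ m → a m ≤ a n) {m n : ℕ} (h : n ≤ m)
    (x : A) :
    locTrans a hmono S m n h (algebraMap _ _ (Ideal.Quotient.mk (a m) x)) =
      algebraMap _ _ (Ideal.Quotient.mk (a n) x) :=
  IsLocalization.map_eq _ _

theorem locTrans_comp_localizationToLevel (hmono : ∀ m n : ℕ, n ≤ m → a m ≤ a n) {m n : ℕ}
    (h : n ≤ m) :
    (locTrans a hmono S m n h).comp (localizationToLevel a S m) = localizationToLevel a S n :=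
  IsLocalization.ringHom_ext S <| RingHom.ext fun x => by
    rw [RingHom.comp_apply, RingHom.comp_apply, localizationToLevel_algebraMap,
      locTrans_algebraMap_mk, RingHom.comp_apply, localizationToLevel_algebraMap]

end Levels

namespace locInvLimit

variable (a : ℕ → Ideal A) (hmono : ∀ m n : ℕ, n ≤ m → a m ≤ a n) (S : Submonoid A)

noncomputable def eval (n : ℕ) :
    locInvLimit a hmono S →+* Localization (quotImageSubmonoid a S n) :=
  (Pi.evalRingHom _ n).comp (locInvLimit a hmono S).subtype

theorem setOf_eval_eq_zero_mem_nhds (n : ℕ) :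
    {f : locInvLimit a hmono S | eval a hmono S n f = 0} ∈ 𝓝 0 :=
  ((continuous_apply n).comp continuous_subtype_val).continuousAt.preimage_mem_nhds
    ((isOpen_discrete {0}).mem_nhds (map_zero (eval a hmono S n)))

theorem locTrans_eval {m n : ℕ} (h : n ≤ m) (f : locInvLimit a hmono S) :
    locTrans a hmono S m n h (eval a hmono S m f) = eval a hmono S n f :=
  f.2 m n h

theorem eval_eq_zero_of_le {m n : ℕ} (h : n ≤ m) {f : locInvLimit a hmono S}
    (hf : eval a hmono S m f = 0) : eval a hmono S n f = 0 := by
  rw [← locTrans_eval a hmono S h, hf, map_zero]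

noncomputable def ofLocalization : Localization S →+* locInvLimit a hmono S :=
  (RingHom.pi (localizationToLevel a S)).codRestrict _ fun z _ _ h =>
    RingHom.congr_fun (locTrans_comp_localizationToLevel a S hmono h) z

theorem ofLocalization_algebraMap (x : A) :
    ofLocalization a hmono S (algebraMap A _ x) = locInvLimitMk a hmono S x :=
  Subtype.ext <| funext fun n => localizationToLevel_algebraMap a S n x

theorem eval_ofLocalization (n : ℕ) (z : Localization S) :
    eval a hmono S n (ofLocalization a hmono S z) = localizationToLevel a S n z :=
  rfl

theorem exists_eval_ofLocalization_eq (f : locInvLimit a hmono S) (m : ℕ) :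
    ∃ z, ∀ n ≤ m, eval a hmono S n (ofLocalization a hmono S z) = eval a hmono S n f := by
  obtain ⟨z, hz⟩ := localizationToLevel_surjective a S m (eval a hmono S m f)
  refine ⟨z, fun n h => ?_⟩
  rw [eval_ofLocalization, ← locTrans_comp_localizationToLevel a S hmono h, RingHom.comp_apply,
    hz, locTrans_eval]

theorem denseRange_ofLocalization : DenseRange (ofLocalization a hmono S) := by
  intro f
  choose z hz using exists_eval_ofLocalization_eq a hmono S f
  refine mem_closure_of_tendsto (b := Filter.atTop) (f := fun m => ofLocalization a hmono S (z m))
    ?_ (Filter.Eventually.of_forall fun m => ⟨z m, rfl⟩)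
  rw [IsEmbedding.subtypeVal.tendsto_nhds_iff, tendsto_pi_nhds]
  exact fun n => tendsto_const_nhds.congr' <|
    Filter.eventually_atTop.mpr ⟨n, fun m hm => (hz m n hm).symm⟩

theorem comp_ofLocalization_eq {C : Type*} [Semiring C] {χ₁ χ₂ : locInvLimit a hmono S →+* C}
    (h : ∀ x, χ₁ (locInvLimitMk a hmono S x) = χ₂ (locInvLimitMk a hmono S x)) :
    χ₁.comp (ofLocalization a hmono S) = χ₂.comp (ofLocalization a hmono S) :=
  IsLocalization.ringHom_ext S <| RingHom.ext fun x => by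
    simpa [ofLocalization_algebraMap] using h x

theorem ringHom_ext_of_continuous {T : Type*} [Semiring T] [TopologicalSpace T] [T2Space T]
    {χ₁ χ₂ : locInvLimit a hmono S →+* T} (h₁ : Continuous χ₁) (h₂ : Continuous χ₂)
    (h : ∀ x, χ₁ (locInvLimitMk a hmono S x) = χ₂ (locInvLimitMk a hmono S x)) : χ₁ = χ₂ :=
  DFunLike.coe_injective <| (denseRange_ofLocalization a hmono S).equalizer h₁ h₂ <|
    congrArg DFunLike.coe (comp_ofLocalization_eq a hmono S h)

theorem ringHom_ext_of_eval_eq_zero {C : Type*} [Ring C] {χ₁ χ₂ : locInvLimit a hmono S →+* C}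
    (n : ℕ) (h₁ : ∀ f, eval a hmono S n f = 0 → χ₁ f = 0)
    (h₂ : ∀ f, eval a hmono S n f = 0 → χ₂ f = 0)
    (h : ∀ x, χ₁ (locInvLimitMk a hmono S x) = χ₂ (locInvLimitMk a hmono S x)) : χ₁ = χ₂ := by
  ext f
  obtain ⟨z, hz⟩ := exists_eval_ofLocalization_eq a hmono S f n
  have hker : eval a hmono S n (f - ofLocalization a hmono S z) = 0 := by
    rw [map_sub, hz n le_rfl, sub_self]
  have hχ₁ := h₁ _ hker
  have hχ₂ := h₂ _ hker
  rw [map_sub, sub_eq_zero] at hχ₁ hχ₂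
  rw [hχ₁, hχ₂]
  exact RingHom.congr_fun (comp_ofLocalization_eq a hmono S h) z

variable {C : Type*} [CommRing C]

noncomputable def liftOfLevel (g : A →+* C) (n : ℕ) (hg : a n ≤ RingHom.ker g)
    (hS : ∀ s ∈ S, IsUnit (g s)) : locInvLimit a hmono S →+* C :=
  (IsLocalization.lift (M := quotImageSubmonoid a S n) (g := Ideal.Quotient.lift (a n) g hg)
    (by rintro ⟨_, s, hs, rfl⟩; exact hS s hs)).comp (eval a hmono S n)

variable {a hmono S}

theorem liftOfLevel_mk {g : A →+* C} {n : ℕ} {hg : a n ≤ RingHom.ker g}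
    {hS : ∀ s ∈ S, IsUnit (g s)} (x : A) :
    liftOfLevel a hmono S g n hg hS (locInvLimitMk a hmono S x) = g x := by
  simp only [liftOfLevel, eval, locInvLimitMk, RingHom.comp_apply, Pi.evalRingHom_apply,
    Subring.coe_subtype, IsLocalization.lift_eq]
  rfl

theorem liftOfLevel_eq_zero {g : A →+* C} {n : ℕ} {hg : a n ≤ RingHom.ker g}
    {hS : ∀ s ∈ S, IsUnit (g s)} {f : locInvLimit a hmono S} (hf : eval a hmono S n f = 0) :
    liftOfLevel a hmono S g n hg hS f = 0 := by
  rw [liftOfLevel, RingHom.comp_apply, hf, map_zero]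

theorem comp_liftOfLevel {D : Type*} [CommRing D] (π : C →+* D) {g : A →+* C} {g' : A →+* D}
    (hπ : ∀ x, π (g x) = g' x) {n n' : ℕ} {hg : a n ≤ RingHom.ker g}
    {hS : ∀ s ∈ S, IsUnit (g s)} {hg' : a n' ≤ RingHom.ker g'} {hS' : ∀ s ∈ S, IsUnit (g' s)} :
    π.comp (liftOfLevel a hmono S g n hg hS) = liftOfLevel a hmono S g' n' hg' hS' :=
  ringHom_ext_of_eval_eq_zero a hmono S (max n n')
    (fun _ hf => by
      rw [RingHom.comp_apply, liftOfLevel_eq_zero (eval_eq_zero_of_le a hmono S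
        (le_max_left n n') hf), map_zero])
    (fun _ hf => liftOfLevel_eq_zero (eval_eq_zero_of_le a hmono S (le_max_right n n') hf))
    (fun x => by rw [RingHom.comp_apply, liftOfLevel_mk, liftOfLevel_mk, hπ])

end locInvLimit

theorem completedLocalization_universal_property_general
    (A : Type*) [CommRing A] [TopologicalSpace A]
    (a : ℕ → Ideal A) (hmono : ∀ m n : ℕ, n ≤ m → a m ≤ a n)
    (hbasis : ∀ s ∈ nhds (0 : A), ∃ n, (a n : Set A) ⊆ s)
    (S : Submonoid A)
    (B : Type*) [CommRing B] [UniformSpace B] [IsUniformAddGroup B]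
    [CompleteSpace B] [T2Space B] (hB : HasLinearRingTopology B)
    (φ : A →+* B) (hφ : Continuous φ) (hunit : ∀ s ∈ S, IsUnit (φ s)) :
    ∃! ψ : locInvLimit a hmono S →+* B,
      Continuous ψ ∧ ∀ x : A, ψ (locInvLimitMk a hmono S x) = φ x := by
  obtain ⟨b, -, hbmono, hbopen, hbbasis⟩ := hB
  have hlevel : ∀ k, ∃ N, a N ≤ RingHom.ker ((Ideal.Quotient.mk (b k)).comp φ) := fun k => by
    obtain ⟨N, hN⟩ := hbasis _ (hφ.tendsto' 0 0 (map_zero φ) ((hbopen k).mem_nhds (b k).zero_mem))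
    exact ⟨N, fun z hz => Ideal.Quotient.eq_zero_iff_mem.mpr (hN hz)⟩
  choose N hN using hlevel
  have hS : ∀ k, ∀ s ∈ S, IsUnit ((Ideal.Quotient.mk (b k)).comp φ s) :=
    fun k s hs => (hunit s hs).map (Ideal.Quotient.mk (b k))
  let ψk k := locInvLimit.liftOfLevel a hmono S _ (N k) (hN k) (hS k)
  obtain ⟨ψ, hψ⟩ := exists_ringHom_mk_comp_eq hbmono hbopen hbbasis ψk fun _ _ _ =>
    locInvLimit.comp_liftOfLevel _ fun _ => rfl
  have hψ_apply : ∀ k f, Ideal.Quotient.mk (b k) (ψ f) = ψk k f := fun k f =>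
    RingHom.congr_fun (hψ k) f
  have hfac : ∀ x, ψ (locInvLimitMk a hmono S x) = φ x := fun x =>
    eq_of_forall_mk_eq hbbasis fun k => by rw [hψ_apply, locInvLimit.liftOfLevel_mk]; rfl
  have hcont : Continuous ψ :=
    continuous_of_preimage_mem_nhds_zero hbopen hbbasis ψ.toAddMonoidHom fun k =>
      Filter.mem_of_superset (locInvLimit.setOf_eval_eq_zero_mem_nhds a hmono S (N k))
        fun f hf => Ideal.Quotient.eq_zero_iff_mem.mp <|
          (hψ_apply k f).trans (locInvLimit.liftOfLevel_eq_zero hf)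
  exact ⟨ψ, ⟨hcont, hfac⟩, fun ψ' ⟨hc', hfac'⟩ =>
    locInvLimit.ringHom_ext_of_continuous a hmono S hc' hcont fun x => by rw [hfac', hfac]⟩

/-- universal property of the separated completed localization: every
continuous ring homomorphism `φ : A → B` to a complete topological ring `B` sending `S`
to units factors uniquely through `j̃ : A → Â_S` via a continuous ring homomorphism. -/
theorem completedLocalization_universal_property
    (A : Type*) [CommRing A] [TopologicalSpace A] [IsTopologicalRing A]
    (a : ℕ → Ideal A) (ha0 : a 0 = ⊤) (hmono : ∀ m n : ℕ, n ≤ m → a m ≤ a n)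
    (hopen : ∀ n, IsOpen (a n : Set A))
    (hbasis : ∀ s ∈ nhds (0 : A), ∃ n, (a n : Set A) ⊆ s)
    (S : Submonoid A)
    (B : Type*) [CommRing B] [UniformSpace B] [IsUniformAddGroup B] [IsTopologicalRing B]
    [CompleteSpace B] [T2Space B] (hB : HasLinearRingTopology B)
    (φ : A →+* B) (hφ : Continuous φ) (hunit : ∀ s ∈ S, IsUnit (φ s)) :
    ∃! ψ : locInvLimit a hmono S →+* B,
      Continuous ψ ∧ ∀ x : A, ψ (locInvLimitMk a hmono S x) = φ x :=
  completedLocalization_universal_property_general A a hmono hbasis S B hB φ hφ hunit
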